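/- arXiv:1810.03757 — 2 statements merged into one kernel-verified Lean document; each statement's English description precedes it below -/
import Mathlib

section
/- Let f ∈ Hol(α) be a bounded α-Hölder potential with distortion constant C_f, let d̄(x,y) = min{1, 4·C_f·d_X(x,y)^α} be the associated equivalent bounded metric on X, and for Borel probability measures μ₁, μ₂ on X let d(μ₁,μ₂) = sup{∫g dμ₁ − ∫g dμ₂ : g:X→ℝ with |g(x)−g(y)| ≤ d̄(x,y) for all x,y} be the corresponding Wasserstein distance. With P^m_n(φ) = L_f^m(φ·L_f^n 1)/L_f^{m+n} 1 and (P^m_n)^*μ the Borel probability measure determined by ∫φ d[(P^m_n)^*μ] = ∫ P^m_n(φ) dμ for bounded measurable φ, there exist m ∈ ℕ and t ∈ (0,1) such that for all n ∈ ℕ∪{0} and all Borel probability measures μ₁, μ₂ on X: d((P^m_n)^*μ₁, (P^m_n)^*μ₂) ≤ t·d(μ₁,μ₂). -/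
open MeasureTheory Filter Topology BoundedContinuousFunction

noncomputable section

variable {E : Type*} [MetricSpace E]

/-- The metric on the sequence space `X = E^ℕ`:
`d_X(x,y) = ∑_{n=1}^∞ 2⁻ⁿ · min(d_E(x_n,y_n), 1)`. -/
def dX (x y : ℕ → E) : ℝ :=
  ∑' n : ℕ, ((1 : ℝ) / 2) ^ (n + 1) * min (dist (x n) (y n)) 1

/-- The left shift `σ(x₁,x₂,x₃,…) = (x₂,x₃,…)`. -/
def shift (x : ℕ → E) : ℕ → E := fun n => x (n + 1)

theorem continuous_shift : Continuous (shift (E := E)) :=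
  continuous_pi fun n => continuous_apply (n + 1)

/-- Prepending one symbol: `ax = (a, x₁, x₂, …)`. -/
def cons (a : E) (x : ℕ → E) : ℕ → E := fun n => Nat.casesOn n a x

/-- Prepending a finite word `a = (a₁,…,a_n)`. -/
def prepend {n : ℕ} (a : Fin n → E) (x : ℕ → E) : ℕ → E :=
  fun k => if h : k < n then a ⟨k, h⟩ else x (k - n)

/-- Birkhoff sums `f_n = ∑_{k=0}^{n-1} f ∘ σᵏ`. -/
def birkhoff (f : (ℕ → E) → ℝ) (n : ℕ) (x : ℕ → E) : ℝ :=
  ∑ k ∈ Finset.range n, f (shift^[k] x)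

/-- Boundedness of a real-valued function on `X`. -/
def Bdd (g : (ℕ → E) → ℝ) : Prop := ∃ M : ℝ, ∀ x, |g x| ≤ M

/-- `g` is `α`-Hölder with constant `C` (w.r.t. the metric `dX`). -/
def HolderConst (α C : ℝ) (g : (ℕ → E) → ℝ) : Prop :=
  ∀ x y, |g x - g y| ≤ C * dX x y ^ α

/-- `g ∈ Hol(α)`: bounded, continuous and `α`-Hölder. -/
def MemHol (α : ℝ) (g : (ℕ → E) → ℝ) : Prop :=
  Continuous g ∧ Bdd g ∧ ∃ C : ℝ, HolderConst α C g

/-- `g ∈ C_b(X,ℝ)`: bounded and continuous. -/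
def MemCb (g : (ℕ → E) → ℝ) : Prop := Continuous g ∧ Bdd g

/-- The Hölder seminorm `D_α(g) = sup_{x ≠ y} |g x - g y| / d_X(x,y)^α`. -/
def Dalpha (α : ℝ) (g : (ℕ → E) → ℝ) : ℝ :=
  sSup {r : ℝ | ∃ x y : ℕ → E, x ≠ y ∧ r = |g x - g y| / dX x y ^ α}

/-- The supremum norm `‖g‖_∞`. -/
def supNorm (g : (ℕ → E) → ℝ) : ℝ := ⨆ x : ℕ → E, |g x|

/-- The Hölder norm `‖g‖_α = ‖g‖_∞ + D_α(g)`. -/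
def alphaNorm (α : ℝ) (g : (ℕ → E) → ℝ) : ℝ := supNorm g + Dalpha α g

variable [MeasurableSpace E] [BorelSpace E]

/-- The Ruelle transfer operator `L_f φ(x) = ∫_E e^{f(ax)} φ(ax) dp(a)`. -/
def ruelle (p : Measure E) (f φ : (ℕ → E) → ℝ) : (ℕ → E) → ℝ :=
  fun x => ∫ a, Real.exp (f (cons a x)) * φ (cons a x) ∂p

/-- The normalized operators `P^m_n(φ) = L_f^m(φ · L_f^n 1) / L_f^{m+n} 1`. -/
def Pmn (p : Measure E) (f : (ℕ → E) → ℝ) (m n : ℕ) (φ : (ℕ → E) → ℝ) : (ℕ → E) → ℝ :=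
  fun x => (ruelle p f)^[m] (fun y => φ y * (ruelle p f)^[n] (fun _ => 1) y) x /
    (ruelle p f)^[m + n] (fun _ => 1) x

/-- The equivalent bounded metric `d̄(x,y) = min{1, 4 C_f d_X(x,y)^α}`. -/
def dbar (Cf α : ℝ) (x y : ℕ → E) : ℝ := min 1 (4 * Cf * dX x y ^ α)

/-- The Wasserstein distance associated to `d̄`, via Kantorovich duality. -/
def wass (Cf α : ℝ) (μ₁ μ₂ : Measure (ℕ → E)) : ℝ :=
  sSup {r : ℝ | ∃ g : (ℕ → E) → ℝ,
    (∀ x y, |g x - g y| ≤ dbar Cf α x y) ∧ r = (∫ x, g x ∂μ₁) - ∫ x, g x ∂μ₂}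

/-!
Write `P^m_n φ (x) = ∫ φ(ax) ρ_x(a) dp^m(a)` with a probability density `ρ_x` on words of
length `m`. Bounded distortion of the Birkhoff sums gives `ρ_y ≤ (1 + C_f d_X(x,y)^α)² ρ_x`.
For a `d̄`-Lipschitz `g`, the difference `P^m_n g(x) - P^m_n g(y)` then splits into the change of
`g` from `ax` to `ay`, at most `2^{-mα} · 4 C_f d_X(x,y)^α`, and the change of density, at most
`1 - (1 + C_f d_X(x,y)^α)⁻²`. The latter is `≤ d̄(x,y)/2` when `d̄(x,y) < 1` and is bounded away
from `1` in any case, so for large `m` the operators `P^m_n` contract `d̄`-Lipschitz constants by a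
factor `t < 1`, uniformly in `n`; by duality so do the `(P^m_n)^*` in the Wasserstein distance.
-/

section Words

variable {E : Type*}

lemma prepend_apply_of_lt {m : ℕ} (a : Fin m → E) (x : ℕ → E) {k : ℕ} (h : k < m) :
    prepend a x k = a ⟨k, h⟩ := dif_pos h

lemma prepend_apply_of_le {m : ℕ} (a : Fin m → E) (x : ℕ → E) {k : ℕ} (h : m ≤ k) :
    prepend a x k = x (k - m) := dif_neg (Nat.not_lt.mpr h)

lemma prepend_of_fin_zero (a : Fin 0 → E) (x : ℕ → E) : prepend a x = x :=
  funext fun k => (prepend_apply_of_le a x k.zero_le).trans (congrArg x k.sub_zero)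

lemma cons_prepend {m : ℕ} (b : E) (a : Fin m → E) (x : ℕ → E) :
    cons b (prepend a x) = prepend (Fin.cons b a) x := by
  funext k
  cases k with
  | zero => rw [prepend_apply_of_lt _ x (Nat.succ_pos m)]; rfl
  | succ k =>
    show prepend a x k = _
    by_cases h : k < m
    · rw [prepend_apply_of_lt a x h, prepend_apply_of_lt _ x (Nat.succ_lt_succ h)]
      exact (Fin.cons_succ (α := fun _ => E) b a ⟨k, h⟩).symm
    · rw [prepend_apply_of_le a x (by omega), prepend_apply_of_le _ x (by omega)]
      congr 1
      omega

lemma shift_prepend {m : ℕ} (a : Fin (m + 1) → E) (x : ℕ → E) :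
    shift (prepend a x) = prepend (Fin.tail a) x := by
  funext k
  show prepend a x (k + 1) = prepend (Fin.tail a) x k
  by_cases h : k < m
  · rw [prepend_apply_of_lt a x (Nat.succ_lt_succ h), prepend_apply_of_lt _ x h]
    rfl
  · rw [prepend_apply_of_le a x (by omega), prepend_apply_of_le _ x (by omega)]
    congr 1
    omega

lemma shift_iterate_prepend {m : ℕ} (a : Fin m → E) (x : ℕ → E) :
    shift^[m] (prepend a x) = x := by
  induction m with
  | zero => exact prepend_of_fin_zero a x
  | succ k ih => rw [Function.iterate_succ_apply, shift_prepend, ih]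

lemma prepend_append {n m : ℕ} (b : Fin n → E) (a : Fin m → E) (x : ℕ → E) :
    prepend (Fin.append b a) x = prepend b (prepend a x) := by
  funext k
  by_cases h₁ : k < n
  · rw [prepend_apply_of_lt _ x (by omega : k < n + m), prepend_apply_of_lt b _ h₁]
    exact Fin.append_left b a ⟨k, h₁⟩
  by_cases h₂ : k < n + m
  · rw [prepend_apply_of_lt _ x h₂, prepend_apply_of_le b _ (by omega),
      prepend_apply_of_lt a x (by omega : k - n < m)]
    have hk : (⟨k, h₂⟩ : Fin (n + m)) = Fin.natAdd n ⟨k - n, by omega⟩ := by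
      ext; simp only [Fin.natAdd_mk]; omega
    rw [hk, Fin.append_right]
  · rw [prepend_apply_of_le _ x (by omega), prepend_apply_of_le b _ (by omega),
      prepend_apply_of_le a x (by omega)]
    congr 1
    omega

lemma shift_cons (b : E) (x : ℕ → E) : shift (cons b x) = x := rfl

lemma birkhoff_add (f : (ℕ → E) → ℝ) (n m : ℕ) (z : ℕ → E) :
    birkhoff f (n + m) z = birkhoff f n z + birkhoff f m (shift^[n] z) := by
  rw [birkhoff, Finset.sum_range_add]
  congr 1
  exact Finset.sum_congr rfl fun k _ => by rw [add_comm, Function.iterate_add_apply]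

lemma birkhoff_succ (f : (ℕ → E) → ℝ) (k : ℕ) (z : ℕ → E) :
    birkhoff f (k + 1) z = f z + birkhoff f k (shift z) := by
  rw [add_comm, birkhoff_add]
  simp [birkhoff]

lemma abs_birkhoff_le {f : (ℕ → E) → ℝ} {M : ℝ} (hM : ∀ z, |f z| ≤ M) (k : ℕ) (z : ℕ → E) :
    |birkhoff f k z| ≤ k * M := by
  calc |birkhoff f k z| ≤ ∑ i ∈ Finset.range k, |f (shift^[i] z)| :=
        Finset.abs_sum_le_sum_abs _ _
    _ ≤ ∑ _i ∈ Finset.range k, M := Finset.sum_le_sum fun i _ => hM _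
    _ = k * M := by simp

lemma bdd_const (c : ℝ) : Bdd fun _ : ℕ → E => c := ⟨|c|, fun _ => le_rfl⟩

lemma Bdd.mul {g h : (ℕ → E) → ℝ} (hg : Bdd g) (hh : Bdd h) : Bdd fun z => g z * h z := by
  obtain ⟨A, hA⟩ := hg
  obtain ⟨B, hB⟩ := hh
  refine ⟨A * B, fun z => ?_⟩
  rw [abs_mul]
  exact mul_le_mul (hA z) (hB z) (abs_nonneg _) ((abs_nonneg _).trans (hA z))

lemma Bdd.exp_birkhoff {f : (ℕ → E) → ℝ} (hf : Bdd f) (k : ℕ) :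
    Bdd fun z => Real.exp (birkhoff f k z) := by
  obtain ⟨M, hM⟩ := hf
  refine ⟨Real.exp (k * M), fun z => ?_⟩
  rw [Real.abs_exp]
  exact Real.exp_le_exp.mpr (abs_le.mp (abs_birkhoff_le hM k z)).2

end Words

section SequenceSpace

variable {E : Type*} [MetricSpace E]

lemma summable_half_pow_succ : Summable (fun n : ℕ => ((1 : ℝ) / 2) ^ (n + 1)) :=
  (summable_nat_add_iff 1).mpr (summable_geometric_of_lt_one (by norm_num) (by norm_num))

lemma tsum_half_pow_succ : ∑' n : ℕ, ((1 : ℝ) / 2) ^ (n + 1) = 1 := by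
  simp only [pow_succ]
  rw [tsum_mul_right, tsum_geometric_of_lt_one (by norm_num) (by norm_num)]
  norm_num

lemma dX_term_nonneg (x y : ℕ → E) (n : ℕ) :
    0 ≤ ((1 : ℝ) / 2) ^ (n + 1) * min (dist (x n) (y n)) 1 :=
  mul_nonneg (by positivity) (le_min dist_nonneg zero_le_one)

lemma dX_term_le (x y : ℕ → E) (n : ℕ) :
    ((1 : ℝ) / 2) ^ (n + 1) * min (dist (x n) (y n)) 1 ≤ ((1 : ℝ) / 2) ^ (n + 1) :=
  mul_le_of_le_one_right (by positivity) (min_le_right _ _)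

lemma summable_dX_term (x y : ℕ → E) :
    Summable (fun n : ℕ => ((1 : ℝ) / 2) ^ (n + 1) * min (dist (x n) (y n)) 1) :=
  summable_half_pow_succ.of_nonneg_of_le (dX_term_nonneg x y) (dX_term_le x y)

lemma dX_nonneg (x y : ℕ → E) : 0 ≤ dX x y :=
  tsum_nonneg (dX_term_nonneg x y)

lemma dX_le_one (x y : ℕ → E) : dX x y ≤ 1 :=
  tsum_half_pow_succ ▸
    (summable_dX_term x y).tsum_le_tsum (dX_term_le x y) summable_half_pow_succ

lemma dX_comm (x y : ℕ → E) : dX x y = dX y x := by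
  simp only [dX, dist_comm]

lemma dX_self (x : ℕ → E) : dX x x = 0 := by
  simp [dX]

lemma continuous_dX_left (z : ℕ → E) : Continuous (fun y => dX y z) := by
  refine continuous_tsum (fun n => ?_) summable_half_pow_succ fun n y => ?_
  · exact continuous_const.mul (((continuous_apply n).dist continuous_const).min continuous_const)
  · rw [Real.norm_of_nonneg (dX_term_nonneg y z n)]
    exact dX_term_le y z n

lemma dX_prepend {m : ℕ} (a : Fin m → E) (x y : ℕ → E) :
    dX (prepend a x) (prepend a y) = ((1 : ℝ) / 2) ^ m * dX x y := by
  rw [dX, ← (summable_dX_term _ _).sum_add_tsum_nat_add m, dX, ← tsum_mul_left]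
  rw [Finset.sum_eq_zero fun i hi => by
    rw [prepend_apply_of_lt a x (Finset.mem_range.mp hi),
      prepend_apply_of_lt a y (Finset.mem_range.mp hi), dist_self, min_eq_left zero_le_one,
      mul_zero], zero_add]
  congr 1 with i
  rw [prepend_apply_of_le a x (by omega), prepend_apply_of_le a y (by omega), Nat.add_sub_cancel]
  ring

end SequenceSpace

section Ruelle

variable {E : Type*} [MeasurableSpace E]

lemma Bdd.integrable_comp {β : Type*} [MeasurableSpace β] {μ : Measure β} [IsFiniteMeasure μ]
    {g : (ℕ → E) → ℝ} (hg : Bdd g) (hgm : Measurable g) {j : β → ℕ → E} (hj : Measurable j) :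
    Integrable (fun b => g (j b)) μ := by
  obtain ⟨C, hC⟩ := hg
  exact .of_bound (hgm.comp hj).aestronglyMeasurable C (.of_forall fun b => hC (j b))

lemma measurable_shift : Measurable (shift : (ℕ → E) → ℕ → E) :=
  measurable_pi_lambda _ fun n => measurable_pi_apply (n + 1)

lemma measurable_birkhoff {f : (ℕ → E) → ℝ} (hf : Measurable f) (k : ℕ) :
    Measurable (birkhoff f k) :=
  Finset.measurable_sum _ fun i _ => hf.comp (measurable_shift.iterate i)

lemma measurable_prepend {m : ℕ} (x : ℕ → E) : Measurable fun a : Fin m → E => prepend a x := by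
  refine measurable_pi_lambda _ fun k => ?_
  by_cases h : k < m
  · simpa only [prepend, dif_pos h] using measurable_pi_apply _
  · simpa only [prepend, dif_neg h] using measurable_const

lemma measurable_cons_uncurry : Measurable fun q : E × (ℕ → E) => cons q.1 q.2 := by
  refine measurable_pi_lambda _ fun k => ?_
  cases k with
  | zero => exact measurable_fst
  | succ n => exact (measurable_pi_apply n).comp measurable_snd

variable {p : Measure E} {f ψ : (ℕ → E) → ℝ}

lemma bdd_ruelle [IsFiniteMeasure p] (hf : Bdd f) (hψ : Bdd ψ) : Bdd (ruelle p f ψ) := by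
  obtain ⟨M, hM⟩ := hf
  obtain ⟨C, hC⟩ := hψ
  refine ⟨Real.exp M * C * p.real Set.univ, fun x => ?_⟩
  rw [← Real.norm_eq_abs]
  refine norm_integral_le_of_norm_le_const (.of_forall fun a => ?_)
  rw [Real.norm_eq_abs, abs_mul, Real.abs_exp]
  exact mul_le_mul (Real.exp_le_exp.mpr (abs_le.mp (hM _)).2) (hC _) (abs_nonneg _)
    (Real.exp_pos _).le

lemma measurable_ruelle [SFinite p] (hf : Measurable f) (hψ : Measurable ψ) :
    Measurable (ruelle p f ψ) := by
  have hc : Measurable fun q : (ℕ → E) × E => cons q.2 q.1 :=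
    measurable_cons_uncurry.comp measurable_swap
  exact ((Real.measurable_exp.comp (hf.comp hc)).mul
    (hψ.comp hc)).stronglyMeasurable.integral_prod_right'.measurable

lemma bdd_ruelle_iterate [IsFiniteMeasure p] (hf : Bdd f) (k : ℕ) (hψ : Bdd ψ) :
    Bdd ((ruelle p f)^[k] ψ) := by
  induction k generalizing ψ with
  | zero => exact hψ
  | succ k ih => exact ih (bdd_ruelle hf hψ)

lemma measurable_ruelle_iterate [SFinite p] (hf : Measurable f) (k : ℕ) (hψ : Measurable ψ) :
    Measurable ((ruelle p f)^[k] ψ) := by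
  induction k generalizing ψ with
  | zero => exact hψ
  | succ k ih => exact ih (measurable_ruelle hf hψ)

theorem ruelle_iterate_eq_integral [IsFiniteMeasure p] (hfm : Measurable f) (hfb : Bdd f)
    (k : ℕ) (hψm : Measurable ψ) (hψb : Bdd ψ) (x : ℕ → E) :
    (ruelle p f)^[k] ψ x = ∫ a : Fin k → E,
      Real.exp (birkhoff f k (prepend a x)) * ψ (prepend a x) ∂Measure.pi fun _ => p := by
  induction k generalizing ψ with
  | zero => simp [birkhoff, prepend_of_fin_zero, Measure.real]
  | succ k ih =>
    set F : (Fin (k + 1) → E) → ℝ :=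
      fun c => Real.exp (birkhoff f (k + 1) (prepend c x)) * ψ (prepend c x)
    have hstep : ∀ a : Fin k → E, Real.exp (birkhoff f k (prepend a x)) *
        ruelle p f ψ (prepend a x) = ∫ b, F (Fin.cons b a) ∂p := by
      intro a
      rw [ruelle, ← integral_const_mul]
      refine integral_congr_ae (.of_forall fun b => ?_)
      simp only [F, ← cons_prepend, birkhoff_succ, shift_cons, Real.exp_add]
      ring
    have hmp := measurePreserving_piFinSuccAbove (fun _ : Fin (k + 1) => p) 0
    rw [Function.iterate_succ_apply, ih (measurable_ruelle hfm hψm) (bdd_ruelle hfb hψb)]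
    simp only [hstep]
    rw [← (MeasurePreserving.symm _ hmp).integral_comp' F, integral_prod_symm]
    · simp only [MeasurableEquiv.piFinSuccAbove_symm_apply, Fin.insertNthEquiv_zero]
      rfl
    · exact ((hfb.exp_birkhoff (k + 1)).mul hψb).integrable_comp
        ((measurable_birkhoff hfm _).exp.mul hψm)
        ((measurable_prepend x).comp (MeasurableEquiv.measurable _))

end Ruelle

section Dbar

variable {E : Type*} [MetricSpace E] {Cf α : ℝ} {g : (ℕ → E) → ℝ}

lemma dbar_le_one (x y : ℕ → E) : dbar Cf α x y ≤ 1 := min_le_left _ _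

lemma dbar_nonneg (hCf : 0 ≤ Cf) (x y : ℕ → E) : 0 ≤ dbar Cf α x y :=
  le_min zero_le_one (mul_nonneg (by positivity) (Real.rpow_nonneg (dX_nonneg x y) α))

lemma bdd_of_abs_sub_le_dbar (hg : ∀ x y, |g x - g y| ≤ dbar Cf α x y) : Bdd g := by
  rcases isEmpty_or_nonempty (ℕ → E) with hX | ⟨⟨z₀⟩⟩
  · exact ⟨0, fun x => hX.elim x⟩
  refine ⟨|g z₀| + 1, fun z => ?_⟩
  linarith [abs_sub_abs_le_abs_sub (g z) (g z₀), hg z z₀, dbar_le_one (Cf := Cf) (α := α) z z₀]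

lemma continuous_of_abs_sub_le_dbar (hα : 0 < α) (hg : ∀ x y, |g x - g y| ≤ dbar Cf α x y) :
    Continuous g := by
  refine continuous_iff_continuousAt.mpr fun z => tendsto_iff_dist_tendsto_zero.mpr ?_
  have hlim : Tendsto (fun y => 4 * Cf * dX y z ^ α) (𝓝 z) (𝓝 0) := by
    have := (((continuous_dX_left z).tendsto z).rpow_const (Or.inr hα.le)).const_mul (4 * Cf)
    rwa [dX_self, Real.zero_rpow hα.ne', mul_zero] at this
  refine squeeze_zero (fun _ => dist_nonneg) (fun y => ?_) hlim
  rw [Real.dist_eq]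
  exact (hg y z).trans (min_le_right _ _)

end Dbar

lemma exists_abs_sub_le_half {β : Type*} [Nonempty β] {h : β → ℝ}
    (hosc : ∀ a b, h a - h b ≤ 1) : ∃ c, ∀ a, |h a - c| ≤ 1 / 2 := by
  obtain ⟨a₀⟩ := ‹Nonempty β›
  have hbdd : BddBelow (Set.range h) := ⟨h a₀ - 1, by rintro _ ⟨a, rfl⟩; linarith [hosc a₀ a]⟩
  refine ⟨(⨅ a, h a) + 1 / 2, fun a => abs_le.mpr ⟨?_, ?_⟩⟩
  · linarith [ciInf_le hbdd a]
  · linarith [le_ciInf fun b => (by linarith [hosc a b] : h a - 1 ≤ h b)]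

/-- Centre `h` as `c + (h - c)` with `|h - c| ≤ 1/2`: the difference is then at most
`½ ∫ |ρ₁ - ρ₂| = 1 - ∫ min ρ₁ ρ₂`, and `min ρ₁ ρ₂ ≥ K⁻¹ ρ₂`. -/
theorem integral_mul_sub_integral_mul_le {β : Type*} [MeasurableSpace β] [Nonempty β]
    {μ : Measure β} {ρ₁ ρ₂ h : β → ℝ} {K : ℝ} (hK : 1 ≤ K)
    (hρ₁ : Integrable ρ₁ μ) (hρ₂ : Integrable ρ₂ μ) (hρ₂0 : 0 ≤ ρ₂)
    (hρ₁1 : ∫ a, ρ₁ a ∂μ = 1) (hρ₂1 : ∫ a, ρ₂ a ∂μ = 1) (hρ : ∀ a, ρ₂ a ≤ K * ρ₁ a)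
    (hm : AEStronglyMeasurable h μ) (hosc : ∀ a b, h a - h b ≤ 1) :
    ∫ a, h a * ρ₁ a ∂μ - ∫ a, h a * ρ₂ a ∂μ ≤ 1 - K⁻¹ := by
  obtain ⟨c, hc⟩ := exists_abs_sub_le_half hosc
  have hbdd : ∀ᵐ a ∂μ, ‖h a‖ ≤ |c| + 1 / 2 := .of_forall fun a => by
    rw [Real.norm_eq_abs]
    linarith [abs_sub_abs_le_abs_sub (h a) c, hc a]
  have hpt : ∀ a, h a * ρ₁ a - h a * ρ₂ a ≤ (c + 1 / 2) * ρ₁ a + (1 / 2 - c - K⁻¹) * ρ₂ a := by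
    intro a
    have hmin₁ : K⁻¹ * ρ₂ a ≤ ρ₁ a := by
      rw [inv_mul_le_iff₀ (by linarith)]
      exact hρ a
    have hmin₂ : K⁻¹ * ρ₂ a ≤ ρ₂ a := mul_le_of_le_one_left (hρ₂0 a) (inv_le_one_of_one_le₀ hK)
    have htv : |ρ₁ a - ρ₂ a| ≤ ρ₁ a + ρ₂ a - 2 * (K⁻¹ * ρ₂ a) :=
      abs_le.mpr ⟨by linarith, by linarith⟩
    have hosc' : (h a - c) * (ρ₁ a - ρ₂ a) ≤ 1 / 2 * |ρ₁ a - ρ₂ a| := by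
      calc (h a - c) * (ρ₁ a - ρ₂ a) ≤ |h a - c| * |ρ₁ a - ρ₂ a| := by
            rw [← abs_mul]; exact le_abs_self _
        _ ≤ 1 / 2 * |ρ₁ a - ρ₂ a| := mul_le_mul_of_nonneg_right (hc a) (abs_nonneg _)
    linear_combination hosc' + 1 / 2 * htv
  have hi₁ := hρ₁.bdd_mul hm hbdd
  have hi₂ := hρ₂.bdd_mul hm hbdd
  calc ∫ a, h a * ρ₁ a ∂μ - ∫ a, h a * ρ₂ a ∂μ = ∫ a, (h a * ρ₁ a - h a * ρ₂ a) ∂μ :=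
        (integral_sub hi₁ hi₂).symm
    _ ≤ ∫ a, ((c + 1 / 2) * ρ₁ a + (1 / 2 - c - K⁻¹) * ρ₂ a) ∂μ :=
        integral_mono (hi₁.sub hi₂) ((hρ₁.const_mul _).add (hρ₂.const_mul _)) hpt
    _ = 1 - K⁻¹ := by
        rw [integral_add (hρ₁.const_mul _) (hρ₂.const_mul _), integral_const_mul,
          integral_const_mul, hρ₁1, hρ₂1]
        ring

section Distortion

variable {E : Type*} [MetricSpace E]

def IsDistortionConst (α Cf : ℝ) (f : (ℕ → E) → ℝ) : Prop :=
  ∀ (n : ℕ) (a : Fin n → E) (x y : ℕ → E),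
    |1 - Real.exp (birkhoff f n (prepend a y) - birkhoff f n (prepend a x))| ≤ Cf * dX x y ^ α

lemma IsDistortionConst.exp_birkhoff_le {α Cf : ℝ} {f : (ℕ → E) → ℝ}
    (hd : IsDistortionConst α Cf f) {k : ℕ} (c : Fin k → E) (x y : ℕ → E) :
    Real.exp (birkhoff f k (prepend c x))
      ≤ (1 + Cf * dX x y ^ α) * Real.exp (birkhoff f k (prepend c y)) := by
  have h := (abs_le.mp (hd k c y x)).1
  rw [dX_comm] at h
  calc Real.exp (birkhoff f k (prepend c x))
      = Real.exp (birkhoff f k (prepend c x) - birkhoff f k (prepend c y))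
          * Real.exp (birkhoff f k (prepend c y)) := by rw [← Real.exp_add, sub_add_cancel]
    _ ≤ _ := mul_le_mul_of_nonneg_right (by linarith) (Real.exp_pos _).le

end Distortion

section TransferDensity

variable {E : Type*} [MeasurableSpace E] {p : Measure E} {f : (ℕ → E) → ℝ}

noncomputable def transferWeight (p : Measure E) (f : (ℕ → E) → ℝ) (m n : ℕ) (x : ℕ → E)
    (a : Fin m → E) : ℝ :=
  Real.exp (birkhoff f m (prepend a x)) * (ruelle p f)^[n] (fun _ => 1) (prepend a x)

/-- The density of `(P^m_n)^* δ_x` with respect to `p^m`, pulled back along `a ↦ ax`. -/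
noncomputable def transferDensity (p : Measure E) (f : (ℕ → E) → ℝ) (m n : ℕ) (x : ℕ → E)
    (a : Fin m → E) : ℝ :=
  transferWeight p f m n x a / (ruelle p f)^[m + n] (fun _ => 1) x

variable [IsProbabilityMeasure p]

lemma ruelle_iterate_one_pos (hfm : Measurable f) (hfb : Bdd f) (k : ℕ) (x : ℕ → E) :
    0 < (ruelle p f)^[k] (fun _ => 1) x := by
  rw [ruelle_iterate_eq_integral hfm hfb k measurable_const (bdd_const 1) x]
  simp only [mul_one]
  exact integral_exp_pos ((hfb.exp_birkhoff k).integrable_comp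
    (measurable_birkhoff hfm k).exp (measurable_prepend x))

lemma transferWeight_pos (hfm : Measurable f) (hfb : Bdd f) (m n : ℕ) (x : ℕ → E)
    (a : Fin m → E) : 0 < transferWeight p f m n x a :=
  mul_pos (Real.exp_pos _) (ruelle_iterate_one_pos hfm hfb n _)

lemma integrable_transferWeight (hfm : Measurable f) (hfb : Bdd f) (m n : ℕ) (x : ℕ → E) :
    Integrable (transferWeight p f m n x) (Measure.pi fun _ => p) :=
  ((hfb.exp_birkhoff m).mul (bdd_ruelle_iterate hfb n (bdd_const 1))).integrable_comp
    ((measurable_birkhoff hfm m).exp.mul (measurable_ruelle_iterate hfm n measurable_const))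
    (measurable_prepend x)

lemma integral_transferWeight (hfm : Measurable f) (hfb : Bdd f) (m n : ℕ) (x : ℕ → E) :
    ∫ a, transferWeight p f m n x a ∂(Measure.pi fun _ => p)
      = (ruelle p f)^[m + n] (fun _ => 1) x := by
  rw [Function.iterate_add_apply, ruelle_iterate_eq_integral hfm hfb m
    (measurable_ruelle_iterate hfm n measurable_const) (bdd_ruelle_iterate hfb n (bdd_const 1)) x]
  rfl

lemma transferWeight_eq_integral (hfm : Measurable f) (hfb : Bdd f) (m n : ℕ) (x : ℕ → E)
    (a : Fin m → E) :
    transferWeight p f m n x a = ∫ b : Fin n → E,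
      Real.exp (birkhoff f (n + m) (prepend (Fin.append b a) x)) ∂(Measure.pi fun _ => p) := by
  rw [transferWeight, ruelle_iterate_eq_integral hfm hfb n measurable_const (bdd_const 1),
    ← integral_const_mul]
  congr 1 with b
  rw [mul_one, ← Real.exp_add, birkhoff_add, prepend_append, shift_iterate_prepend, add_comm]

lemma integrable_transferDensity (hfm : Measurable f) (hfb : Bdd f) (m n : ℕ) (x : ℕ → E) :
    Integrable (transferDensity p f m n x) (Measure.pi fun _ => p) :=
  (integrable_transferWeight hfm hfb m n x).div_const _

lemma transferDensity_nonneg (hfm : Measurable f) (hfb : Bdd f) (m n : ℕ) (x : ℕ → E) :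
    0 ≤ transferDensity p f m n x := fun a =>
  div_nonneg (transferWeight_pos hfm hfb m n x a).le (ruelle_iterate_one_pos hfm hfb _ x).le

lemma integral_transferDensity (hfm : Measurable f) (hfb : Bdd f) (m n : ℕ) (x : ℕ → E) :
    ∫ a, transferDensity p f m n x a ∂(Measure.pi fun _ => p) = 1 := by
  simp_rw [transferDensity]
  rw [integral_div, integral_transferWeight hfm hfb,
    div_self (ruelle_iterate_one_pos hfm hfb _ x).ne']

lemma Pmn_eq_integral (hfm : Measurable f) (hfb : Bdd f) (m n : ℕ) {g : (ℕ → E) → ℝ}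
    (hgm : Measurable g) (hgb : Bdd g) (x : ℕ → E) :
    Pmn p f m n g x
      = ∫ a, g (prepend a x) * transferDensity p f m n x a ∂(Measure.pi fun _ => p) := by
  rw [Pmn, ruelle_iterate_eq_integral (ψ := fun y => g y * (ruelle p f)^[n] (fun _ => 1) y)
    hfm hfb m (hgm.mul (measurable_ruelle_iterate hfm n measurable_const))
    (hgb.mul (bdd_ruelle_iterate hfb n (bdd_const 1))) x, ← integral_div]
  congr 1 with a
  rw [transferDensity, transferWeight]
  ring

lemma integrable_mul_transferDensity (hfm : Measurable f) (hfb : Bdd f) (m n : ℕ)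
    {g : (ℕ → E) → ℝ} (hgm : Measurable g) (hgb : Bdd g) (z x : ℕ → E) :
    Integrable (fun a => g (prepend a z) * transferDensity p f m n x a)
      (Measure.pi fun _ => p) := by
  obtain ⟨C, hC⟩ := hgb
  exact (integrable_transferDensity hfm hfb m n x).bdd_mul
    (hgm.comp (measurable_prepend z)).aestronglyMeasurable (.of_forall fun a => hC _)

end TransferDensity

section KeyEstimate

variable {E : Type*} [MetricSpace E] [MeasurableSpace E] {p : Measure E} [IsProbabilityMeasure p]
  {f : (ℕ → E) → ℝ} {α Cf : ℝ}

lemma transferWeight_le (hfm : Measurable f) (hfb : Bdd f) (hd : IsDistortionConst α Cf f)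
    (m n : ℕ) (x y : ℕ → E) (a : Fin m → E) :
    transferWeight p f m n x a ≤ (1 + Cf * dX x y ^ α) * transferWeight p f m n y a := by
  have hint : ∀ z, Integrable (fun b : Fin n → E =>
      Real.exp (birkhoff f (n + m) (prepend (Fin.append b a) z))) (Measure.pi fun _ => p) := by
    intro z
    simp_rw [prepend_append]
    exact (hfb.exp_birkhoff _).integrable_comp (measurable_birkhoff hfm _).exp
      (measurable_prepend _)
  rw [transferWeight_eq_integral hfm hfb, transferWeight_eq_integral hfm hfb,
    ← integral_const_mul]
  exact integral_mono (hint x) ((hint y).const_mul _) fun b => hd.exp_birkhoff_le _ x y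

lemma transferDensity_le (hfm : Measurable f) (hfb : Bdd f) (hd : IsDistortionConst α Cf f)
    (hCf : 0 ≤ Cf) (m n : ℕ) (x y : ℕ → E) (a : Fin m → E) :
    transferDensity p f m n y a ≤ (1 + Cf * dX x y ^ α) ^ 2 * transferDensity p f m n x a := by
  set ε := Cf * dX x y ^ α
  have hε : 0 ≤ ε := mul_nonneg hCf (Real.rpow_nonneg (dX_nonneg x y) α)
  have hW : transferWeight p f m n y a ≤ (1 + ε) * transferWeight p f m n x a := by
    simpa only [dX_comm y x] using transferWeight_le hfm hfb hd m n y x a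
  have hD : (ruelle p f)^[m + n] (fun _ => 1) x
      ≤ (1 + ε) * (ruelle p f)^[m + n] (fun _ => 1) y := by
    rw [← integral_transferWeight hfm hfb, ← integral_transferWeight hfm hfb,
      ← integral_const_mul]
    exact integral_mono (integrable_transferWeight hfm hfb m n x)
      ((integrable_transferWeight hfm hfb m n y).const_mul _)
      fun a => transferWeight_le hfm hfb hd m n x y a
  have hρx : 0 ≤ transferDensity p f m n x a := transferDensity_nonneg hfm hfb m n x a
  rw [transferDensity, div_le_iff₀ (ruelle_iterate_one_pos hfm hfb _ y)]
  calc transferWeight p f m n y a ≤ (1 + ε) * transferWeight p f m n x a := hW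
    _ = (1 + ε) * transferDensity p f m n x a * (ruelle p f)^[m + n] (fun _ => 1) x := by
        rw [transferDensity, mul_assoc,
          div_mul_cancel₀ _ (ruelle_iterate_one_pos hfm hfb _ x).ne']
    _ ≤ (1 + ε) * transferDensity p f m n x a
          * ((1 + ε) * (ruelle p f)^[m + n] (fun _ => 1) y) := by
        gcongr
    _ = (1 + ε) ^ 2 * transferDensity p f m n x a * (ruelle p f)^[m + n] (fun _ => 1) y := by
        ring

theorem Pmn_sub_Pmn_le (hfm : Measurable f) (hfb : Bdd f) (hd : IsDistortionConst α Cf f)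
    (hCf : 0 ≤ Cf) (m n : ℕ) {g : (ℕ → E) → ℝ} (hgm : Measurable g)
    (hg : ∀ u v, |g u - g v| ≤ dbar Cf α u v) (x y : ℕ → E) :
    Pmn p f m n g x - Pmn p f m n g y
      ≤ 4 * ((1 / 2 : ℝ) ^ m) ^ α * (Cf * dX x y ^ α) + (1 - ((1 + Cf * dX x y ^ α) ^ 2)⁻¹) := by
  have := nonempty_of_isProbabilityMeasure p
  have hgb := bdd_of_abs_sub_le_dbar hg
  set κ := 4 * ((1 / 2 : ℝ) ^ m) ^ α * (Cf * dX x y ^ α)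
  have hκ : ∀ a : Fin m → E, g (prepend a x) ≤ g (prepend a y) + κ := by
    intro a
    have hdbar : dbar Cf α (prepend a x) (prepend a y) ≤ κ := by
      refine (min_le_right _ _).trans_eq ?_
      rw [dX_prepend, Real.mul_rpow (by positivity) (dX_nonneg x y)]
      ring
    linarith [(abs_le.mp (hg (prepend a x) (prepend a y))).2]
  have hρx := integrable_transferDensity (p := p) hfm hfb m n x
  have hcyl : ∫ a, g (prepend a x) * transferDensity p f m n x a ∂(Measure.pi fun _ => p)
      ≤ ∫ a, g (prepend a y) * transferDensity p f m n x a ∂(Measure.pi fun _ => p) + κ :=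
    calc _ ≤ ∫ a, (g (prepend a y) * transferDensity p f m n x a
              + κ * transferDensity p f m n x a) ∂(Measure.pi fun _ => p) :=
          integral_mono (integrable_mul_transferDensity hfm hfb m n hgm hgb x x)
            ((integrable_mul_transferDensity hfm hfb m n hgm hgb y x).add (hρx.const_mul κ))
            fun a => (mul_le_mul_of_nonneg_right (hκ a)
              (transferDensity_nonneg hfm hfb m n x a)).trans_eq (add_mul _ _ _)
      _ = _ := by
          rw [integral_add (integrable_mul_transferDensity hfm hfb m n hgm hgb y x)
            (hρx.const_mul κ), integral_const_mul, integral_transferDensity hfm hfb, mul_one]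
  have hmix := integral_mul_sub_integral_mul_le (h := fun a => g (prepend a y))
    (one_le_pow₀ (by linarith [mul_nonneg hCf (Real.rpow_nonneg (dX_nonneg x y) α)])) hρx
    (integrable_transferDensity hfm hfb m n y) (transferDensity_nonneg hfm hfb m n y)
    (integral_transferDensity hfm hfb m n x) (integral_transferDensity hfm hfb m n y)
    (transferDensity_le hfm hfb hd hCf m n x y)
    (hgm.comp (measurable_prepend y)).aestronglyMeasurable
    fun a b => (le_abs_self _).trans ((hg _ _).trans (dbar_le_one _ _))
  rw [Pmn_eq_integral hfm hfb m n hgm hgb x, Pmn_eq_integral hfm hfb m n hgm hgb y]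
  linarith

end KeyEstimate

/-- For `d̄ = 4 C_f d ≤ 1` the bound is at most `(1/4 + 1/2) d̄`, using `1 - (1+e)⁻² ≤ 2e`; for
`d̄ = 1` the first term is at most `δ/2` and the second at most `1 - δ`, `δ = (1 + C_f)⁻²`. -/
lemma contraction_bound {Cf d q : ℝ} (hCf : 0 ≤ Cf) (hd0 : 0 ≤ d) (hd1 : d ≤ 1) (hq0 : 0 ≤ q)
    (hq : q ≤ 1 / 4) (hqC : 8 * Cf * q ≤ ((1 + Cf) ^ 2)⁻¹) :
    4 * q * (Cf * d) + (1 - ((1 + Cf * d) ^ 2)⁻¹)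
      ≤ max (3 / 4) (1 - ((1 + Cf) ^ 2)⁻¹ / 2) * min 1 (4 * Cf * d) := by
  have he0 : 0 ≤ Cf * d := mul_nonneg hCf hd0
  have heC : Cf * d ≤ Cf := mul_le_of_le_one_right hCf hd1
  rcases le_total (4 * Cf * d) 1 with hs | hl
  · rw [min_eq_right hs]
    have hinv : 1 - 2 * (Cf * d) ≤ ((1 + Cf * d) ^ 2)⁻¹ := by
      rw [← one_div, le_div_iff₀ (by positivity)]
      nlinarith [mul_nonneg he0 he0, pow_nonneg he0 3]
    have hmax := mul_le_mul_of_nonneg_right (le_max_left (3 / 4 : ℝ) (1 - ((1 + Cf) ^ 2)⁻¹ / 2))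
      (by positivity : 0 ≤ 4 * Cf * d)
    nlinarith
  · rw [min_eq_left hl, mul_one]
    have hinv : ((1 + Cf) ^ 2)⁻¹ ≤ ((1 + Cf * d) ^ 2)⁻¹ := by gcongr
    have hqe : q * (Cf * d) ≤ q * Cf := mul_le_mul_of_nonneg_left heC hq0
    linarith [le_max_right (3 / 4 : ℝ) (1 - ((1 + Cf) ^ 2)⁻¹ / 2)]

theorem exists_Pmn_contraction {E : Type*} [MetricSpace E] [MeasurableSpace E] {p : Measure E}
    [IsProbabilityMeasure p] {f : (ℕ → E) → ℝ} {α Cf : ℝ} (hfm : Measurable f) (hfb : Bdd f)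
    (hd : IsDistortionConst α Cf f) (hCf : 0 ≤ Cf) (hα : 0 < α) :
    ∃ (m : ℕ) (t : ℝ), 1 ≤ m ∧ 0 < t ∧ t < 1 ∧
      ∀ (n : ℕ) (g : (ℕ → E) → ℝ), Measurable g → (∀ u v, |g u - g v| ≤ dbar Cf α u v) →
        ∀ x y, |Pmn p f m n g x - Pmn p f m n g y| ≤ t * dbar Cf α x y := by
  set δ := ((1 + Cf) ^ 2)⁻¹
  have hδ : 0 < δ := by positivity
  have hq : Tendsto (fun m : ℕ => ((1 / 2 : ℝ) ^ m) ^ α) atTop (𝓝 0) := by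
    have := (tendsto_pow_atTop_nhds_zero_of_lt_one (by norm_num : (0 : ℝ) ≤ 1 / 2)
      (by norm_num)).rpow_const (Or.inr hα.le)
    rwa [Real.zero_rpow hα.ne'] at this
  obtain ⟨m, hm, hq4, hqδ⟩ := ((eventually_ge_atTop 1).and
    ((hq.eventually (ge_mem_nhds (by norm_num : (0 : ℝ) < 1 / 4))).and
      ((hq.const_mul (8 * Cf)).eventually (ge_mem_nhds (by rwa [mul_zero]))))).exists
  refine ⟨m, max (3 / 4) (1 - δ / 2), hm, lt_max_of_lt_left (by norm_num),
    max_lt (by norm_num) (by linarith), fun n g hgm hg x y => ?_⟩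
  have hd0 := Real.rpow_nonneg (dX_nonneg x y) α
  have hd1 := Real.rpow_le_one (dX_nonneg x y) (dX_le_one x y) hα.le
  refine (abs_sub_le_iff.mpr ⟨Pmn_sub_Pmn_le hfm hfb hd hCf m n hgm hg x y, ?_⟩).trans
    (contraction_bound hCf hd0 hd1 (by positivity) hq4 (by linarith))
  simpa only [dX_comm y x] using Pmn_sub_Pmn_le hfm hfb hd hCf m n hgm hg y x

section Wasserstein

variable {E : Type*} [MetricSpace E] [MeasurableSpace E] [BorelSpace E]
  [SecondCountableTopology E] {Cf α : ℝ}

lemma integral_sub_integral_le_one {μ₁ μ₂ : Measure (ℕ → E)} [IsProbabilityMeasure μ₁]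
    [IsProbabilityMeasure μ₂] (hα : 0 < α) {g : (ℕ → E) → ℝ}
    (hg : ∀ x y, |g x - g y| ≤ dbar Cf α x y) :
    ∫ x, g x ∂μ₁ - ∫ x, g x ∂μ₂ ≤ 1 := by
  have := nonempty_of_isProbabilityMeasure μ₁
  obtain ⟨c, hc⟩ := exists_abs_sub_le_half fun x y =>
    (le_abs_self _).trans ((hg x y).trans (dbar_le_one (Cf := Cf) (α := α) x y))
  have hgm := (continuous_of_abs_sub_le_dbar hα hg).measurable
  obtain ⟨C, hC⟩ := bdd_of_abs_sub_le_dbar hg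
  have hint : ∀ μ : Measure (ℕ → E), IsProbabilityMeasure μ → Integrable g μ := fun μ _ =>
    .of_bound hgm.aestronglyMeasurable C (.of_forall hC)
  have h₁ : ∫ x, g x ∂μ₁ ≤ c + 1 / 2 := by
    simpa using integral_mono (hint μ₁ ‹_›) (integrable_const (c + 1 / 2))
      fun x => by linarith [(abs_le.mp (hc x)).2]
  have h₂ : c - 1 / 2 ≤ ∫ x, g x ∂μ₂ := by
    simpa using integral_mono (integrable_const (c - 1 / 2)) (hint μ₂ ‹_›)
      fun x => by linarith [(abs_le.mp (hc x)).1]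
  linarith

theorem wass_le_mul_of_forall_abs_sub_le {t : ℝ} (hCf : 0 ≤ Cf) (hα : 0 < α) (ht : 0 < t)
    {T : ((ℕ → E) → ℝ) → (ℕ → E) → ℝ} {μ₁ μ₂ ν₁ ν₂ : Measure (ℕ → E)}
    [IsProbabilityMeasure μ₁] [IsProbabilityMeasure μ₂]
    (hT : ∀ g, Measurable g → (∀ x y, |g x - g y| ≤ dbar Cf α x y) →
      ∀ x y, |T g x - T g y| ≤ t * dbar Cf α x y)
    (h₁ : ∀ φ, Measurable φ → Bdd φ → ∫ x, φ x ∂ν₁ = ∫ x, T φ x ∂μ₁)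
    (h₂ : ∀ φ, Measurable φ → Bdd φ → ∫ x, φ x ∂ν₂ = ∫ x, T φ x ∂μ₂) :
    wass Cf α ν₁ ν₂ ≤ t * wass Cf α μ₁ μ₂ := by
  have hbdd : BddAbove {r : ℝ | ∃ g : (ℕ → E) → ℝ,
      (∀ x y, |g x - g y| ≤ dbar Cf α x y) ∧ r = (∫ x, g x ∂μ₁) - ∫ x, g x ∂μ₂} := by
    refine ⟨1, ?_⟩
    rintro _ ⟨g, hg, rfl⟩
    exact integral_sub_integral_le_one hα hg
  have hwass : 0 ≤ wass Cf α μ₁ μ₂ :=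
    le_csSup hbdd ⟨0, fun x y => by simpa using dbar_nonneg hCf x y, by simp⟩
  refine Real.sSup_le ?_ (mul_nonneg ht.le hwass)
  rintro _ ⟨g, hg, rfl⟩
  have hgm := (continuous_of_abs_sub_le_dbar hα hg).measurable
  have hgb := bdd_of_abs_sub_le_dbar hg
  have hTg : ∀ x y, |t⁻¹ * T g x - t⁻¹ * T g y| ≤ dbar Cf α x y := fun x y => by
    rw [← mul_sub, abs_mul, abs_inv, abs_of_pos ht, inv_mul_le_iff₀ ht]
    exact hT g hgm hg x y
  have hle := le_csSup hbdd ⟨fun x => t⁻¹ * T g x, hTg, rfl⟩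
  rw [integral_const_mul, integral_const_mul, ← mul_sub, inv_mul_le_iff₀ ht] at hle
  rw [h₁ g hgm hgb, h₂ g hgm hgb]
  exact hle

end Wasserstein

theorem statement4_general {E : Type*} [MetricSpace E]
    [TopologicalSpace.SeparableSpace E] [MeasurableSpace E] [BorelSpace E]
    (p : Measure E) [IsProbabilityMeasure p]
    (α : ℝ) (hα0 : 0 < α)
    (f : (ℕ → E) → ℝ) (hf : MemHol α f)
    (Cf : ℝ) (hCf : 0 < Cf)
    (hdist : ∀ (n : ℕ) (a : Fin n → E) (x y : ℕ → E),
      |1 - Real.exp (birkhoff f n (prepend a y) - birkhoff f n (prepend a x))|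
        ≤ Cf * dX x y ^ α) :
    ∃ (m : ℕ) (t : ℝ), 1 ≤ m ∧ 0 < t ∧ t < 1 ∧
      ∀ (n : ℕ) (μ₁ μ₂ ν₁ ν₂ : Measure (ℕ → E)),
        IsProbabilityMeasure μ₁ → IsProbabilityMeasure μ₂ →
        IsProbabilityMeasure ν₁ → IsProbabilityMeasure ν₂ →
        (∀ φ : (ℕ → E) → ℝ, Measurable φ → Bdd φ →
          (∫ x, φ x ∂ν₁) = ∫ x, Pmn p f m n φ x ∂μ₁) →
        (∀ φ : (ℕ → E) → ℝ, Measurable φ → Bdd φ →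
          (∫ x, φ x ∂ν₂) = ∫ x, Pmn p f m n φ x ∂μ₂) →
        wass Cf α ν₁ ν₂ ≤ t * wass Cf α μ₁ μ₂ := by
  have : SecondCountableTopology E := UniformSpace.secondCountable_of_separable E
  obtain ⟨hfc, hfb, -⟩ := hf
  obtain ⟨m, t, hm, ht0, ht1, hcontr⟩ :=
    exists_Pmn_contraction (p := p) hfc.measurable hfb hdist hCf.le hα0
  exact ⟨m, t, hm, ht0, ht1, fun n μ₁ μ₂ ν₁ ν₂ _ _ _ _ h₁ h₂ =>
    wass_le_mul_of_forall_abs_sub_le hCf.le hα0 ht0 (hcontr n) h₁ h₂⟩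

/-- The dual operators `(P^m_n)^*` strictly contract the Wasserstein
metric associated to `d̄`, for some `m ∈ ℕ`, uniformly in `n`. -/
theorem statement4 {E : Type*} [MetricSpace E] [CompleteSpace E]
    [TopologicalSpace.SeparableSpace E] [MeasurableSpace E] [BorelSpace E] [Nonempty E]
    (p : Measure E) [IsProbabilityMeasure p]
    (α : ℝ) (hα0 : 0 < α) (hα1 : α < 1)
    (f : (ℕ → E) → ℝ) (hf : MemHol α f)
    (Cf : ℝ) (hCf : 0 < Cf)
    (hdist : ∀ (n : ℕ) (a : Fin n → E) (x y : ℕ → E),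
      |1 - Real.exp (birkhoff f n (prepend a y) - birkhoff f n (prepend a x))|
        ≤ Cf * dX x y ^ α) :
    ∃ (m : ℕ) (t : ℝ), 1 ≤ m ∧ 0 < t ∧ t < 1 ∧
      ∀ (n : ℕ) (μ₁ μ₂ ν₁ ν₂ : Measure (ℕ → E)),
        IsProbabilityMeasure μ₁ → IsProbabilityMeasure μ₂ →
        IsProbabilityMeasure ν₁ → IsProbabilityMeasure ν₂ →
        (∀ φ : (ℕ → E) → ℝ, Measurable φ → Bdd φ →
          (∫ x, φ x ∂ν₁) = ∫ x, Pmn p f m n φ x ∂μ₁) →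
        (∀ φ : (ℕ → E) → ℝ, Measurable φ → Bdd φ →
          (∫ x, φ x ∂ν₂) = ∫ x, Pmn p f m n φ x ∂μ₂) →
        wass Cf α ν₁ ν₂ ≤ t * wass Cf α μ₁ μ₂ :=
  statement4_general p α hα0 f hf Cf hCf hdist

end
end

section
/- Let S be an arbitrary topological space and let M^a_1(S) denote the set of functionals μ in the topological dual of C_b(S,ℝ) with operator norm one and μ(f) ≥ 0 for every f ≥ 0. For μ ∈ M^a_1(S), the following are equivalent: (i) μ is an extreme point of M^a_1(S); (iv) μ is a lattice homomorphism, i.e. |μ(f)| = μ(|f|) for all f ∈ C_b(S,ℝ); (v) μ is an algebra homomorphism, i.e. μ(f₁·f₂) = μ(f₁)·μ(f₂) for all f₁, f₂ ∈ C_b(S,ℝ). -/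
open BoundedContinuousFunction

/-- `M^a_1(S)`: the norm-one positive functionals on `C_b(S,ℝ)`. -/
def Ma1S (S : Type*) [TopologicalSpace S] : Set ((S →ᵇ ℝ) →L[ℝ] ℝ) :=
  {μ | ‖μ‖ = 1 ∧ ∀ f : S →ᵇ ℝ, 0 ≤ f → 0 ≤ μ f}

/-!
A positive functional `ν` on `C_b(S,ℝ)` satisfies `|ν f| ≤ ν |f| ≤ ‖f‖ ν 1`, hence `‖ν‖ = ν 1`.

If `μ` is extreme and `0 ≤ g ≤ 1`, then `μ = μ (g ·) + μ ((1 - g) ·)` splits `μ` into two positive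
functionals, so `μ (g ·)` is the multiple `μ g • μ`; writing an arbitrary `g` as a difference of
rescaled such functions shows that `μ` is multiplicative. A multiplicative positive `μ` satisfies
`(μ |f|)² = μ (f²) = (μ f)²`, so it is a lattice homomorphism. Finally, if `μ` is a lattice
homomorphism then `μ |f - μ f| = 0`; every `ν` with `μ` in an open segment through `ν` is dominated
by a multiple of `μ`, so `ν |f - μ f| = 0` as well, which gives `ν f = μ f`.
-/

section PositiveFunctional

variable {S : Type*} [TopologicalSpace S] {ν : (S →ᵇ ℝ) →L[ℝ] ℝ}

lemma BoundedContinuousFunction.abs_apply_le_norm (f : S →ᵇ ℝ) (x : S) : |f x| ≤ ‖f‖ := by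
  simpa [Real.norm_eq_abs] using f.norm_coe_le_norm x

lemma BoundedContinuousFunction.abs_le_norm_smul_one (f : S →ᵇ ℝ) : |f| ≤ ‖f‖ • 1 := fun x => by
  simpa using f.abs_apply_le_norm x

lemma BoundedContinuousFunction.one_nonneg : (0 : S →ᵇ ℝ) ≤ 1 := fun _ => zero_le_one

lemma abs_apply_le_apply_abs (hν : ∀ f : S →ᵇ ℝ, 0 ≤ f → 0 ≤ ν f) (f : S →ᵇ ℝ) :
    |ν f| ≤ ν |f| := by
  have hmono := (monotone_iff_map_nonneg ν).2 hν
  rw [abs_le, ← map_neg]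
  exact ⟨hmono (neg_le.1 (neg_le_abs f)), hmono (le_abs_self f)⟩

lemma abs_apply_le_norm_mul_apply_one (hν : ∀ f : S →ᵇ ℝ, 0 ≤ f → 0 ≤ ν f) (f : S →ᵇ ℝ) :
    |ν f| ≤ ‖f‖ * ν 1 :=
  calc |ν f| ≤ ν |f| := abs_apply_le_apply_abs hν f
    _ ≤ ν (‖f‖ • 1) := (monotone_iff_map_nonneg ν).2 hν f.abs_le_norm_smul_one
    _ = ‖f‖ * ν 1 := by rw [map_smul, smul_eq_mul]

lemma eq_zero_of_apply_one_eq_zero (hν : ∀ f : S →ᵇ ℝ, 0 ≤ f → 0 ≤ ν f) (h1 : ν 1 = 0) :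
    ν = 0 := by
  ext f
  simpa [h1] using abs_apply_le_norm_mul_apply_one hν f

lemma norm_eq_apply_one (hν : ∀ f : S →ᵇ ℝ, 0 ≤ f → 0 ≤ ν f) : ‖ν‖ = ν 1 := by
  refine le_antisymm (ν.opNorm_le_bound (hν 1 one_nonneg) fun f => ?_) ?_
  · simpa [mul_comm] using abs_apply_le_norm_mul_apply_one hν f
  · calc ν 1 ≤ ‖ν 1‖ := le_abs_self _
      _ ≤ ‖ν‖ * ‖(1 : S →ᵇ ℝ)‖ := ν.le_opNorm 1
      _ ≤ ‖ν‖ := mul_le_of_le_one_right (norm_nonneg ν) ((norm_le zero_le_one).2 fun _ => by simp)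

lemma mem_Ma1S_iff : ν ∈ Ma1S S ↔ ν 1 = 1 ∧ ∀ f : S →ᵇ ℝ, 0 ≤ f → 0 ≤ ν f :=
  ⟨fun h => ⟨norm_eq_apply_one h.2 ▸ h.1, h.2⟩, fun h => ⟨(norm_eq_apply_one h.2).trans h.1, h.2⟩⟩

lemma inv_apply_one_smul_mem_Ma1S (hν : ∀ f : S →ᵇ ℝ, 0 ≤ f → 0 ≤ ν f) (h1 : 0 < ν 1) :
    (ν 1)⁻¹ • ν ∈ Ma1S S :=
  mem_Ma1S_iff.2 ⟨by simp [h1.ne'], fun f hf => smul_nonneg (inv_nonneg.2 h1.le) (hν f hf)⟩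

end PositiveFunctional

section ExtremePoints

variable {S : Type*} [TopologicalSpace S] {μ ν : (S →ᵇ ℝ) →L[ℝ] ℝ}

lemma eq_apply_one_smul_of_le_of_mem_extremePoints (hμ : μ ∈ (Ma1S S).extremePoints ℝ)
    (hν : ∀ f : S →ᵇ ℝ, 0 ≤ f → 0 ≤ ν f) (hνμ : ∀ f : S →ᵇ ℝ, 0 ≤ f → ν f ≤ μ f) :
    ν = ν 1 • μ := by
  have hμ1 : μ 1 = 1 := (mem_Ma1S_iff.1 hμ.1).1
  have hμν : ∀ f : S →ᵇ ℝ, 0 ≤ f → 0 ≤ (μ - ν) f := fun f hf => sub_nonneg.2 (hνμ f hf)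
  have hμν1 : (μ - ν) 1 = 1 - ν 1 := by simp [hμ1]
  rcases (hν 1 one_nonneg).eq_or_lt with hν0 | hν0
  · rw [← hν0, zero_smul]
    exact eq_zero_of_apply_one_eq_zero hν hν0.symm
  rcases (hνμ 1 one_nonneg).eq_or_lt with hν1 | hν1
  · rw [hν1, hμ1, one_smul]
    exact (sub_eq_zero.1 (eq_zero_of_apply_one_eq_zero hμν (by simp [hν1]))).symm
  rw [hμ1] at hν1
  have hseg : μ ∈ openSegment ℝ ((ν 1)⁻¹ • ν) (((μ - ν) 1)⁻¹ • (μ - ν)) := by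
    refine ⟨ν 1, 1 - ν 1, hν0, sub_pos.2 hν1, add_sub_cancel _ _, ?_⟩
    rw [hμν1, smul_inv_smul₀ hν0.ne', smul_inv_smul₀ (sub_pos.2 hν1).ne']
    exact add_sub_cancel ν μ
  have hνμ' := (mem_extremePoints_iff_left.1 hμ).2 _ (inv_apply_one_smul_mem_Ma1S hν hν0) _
    (inv_apply_one_smul_mem_Ma1S hμν (by rw [hμν1]; exact sub_pos.2 hν1)) hseg
  rw [← hνμ', smul_inv_smul₀ hν0.ne']

lemma apply_mul_of_mem_extremePoints_of_le_one (hμ : μ ∈ (Ma1S S).extremePoints ℝ)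
    {g : S →ᵇ ℝ} (hg0 : 0 ≤ g) (hg1 : g ≤ 1) (f : S →ᵇ ℝ) : μ (g * f) = μ g * μ f := by
  have hpos := hμ.1.2
  have h := eq_apply_one_smul_of_le_of_mem_extremePoints hμ
    (ν := μ.comp (ContinuousLinearMap.mul ℝ _ g))
    (fun h hh => hpos _ fun x => mul_nonneg (hg0 x) (hh x))
    (fun h hh => by
      simpa [sub_mul] using hpos ((1 - g) * h) fun x => mul_nonneg (sub_nonneg.2 (hg1 x)) (hh x))
  simpa using congrArg (· f) h

lemma apply_mul_of_mem_extremePoints (hμ : μ ∈ (Ma1S S).extremePoints ℝ) (g f : S →ᵇ ℝ) :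
    μ (g * f) = μ g * μ f := by
  have hnonneg : ∀ g : S →ᵇ ℝ, 0 ≤ g → μ (g * f) = μ g * μ f := by
    intro g hg
    have hc : 0 < ‖g‖ + 1 := by positivity
    have hg1 : (‖g‖ + 1)⁻¹ • g ≤ 1 := fun x => by
      change (‖g‖ + 1)⁻¹ * g x ≤ 1
      rw [inv_mul_le_iff₀ hc, mul_one]
      linarith [(le_abs_self (g x)).trans (g.abs_apply_le_norm x)]
    have hg0 : 0 ≤ (‖g‖ + 1)⁻¹ • g := fun x => mul_nonneg (inv_nonneg.2 hc.le) (hg x)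
    have h := apply_mul_of_mem_extremePoints_of_le_one hμ hg0 hg1 f
    simpa [smul_mul_assoc, hc.ne', mul_assoc] using h
  rw [← posPart_sub_negPart g, sub_mul, map_sub, map_sub, sub_mul,
    hnonneg _ (posPart_nonneg g), hnonneg _ (negPart_nonneg g)]

lemma abs_apply_of_apply_mul (hν : ∀ f : S →ᵇ ℝ, 0 ≤ f → 0 ≤ ν f)
    (hmul : ∀ f₁ f₂ : S →ᵇ ℝ, ν (f₁ * f₂) = ν f₁ * ν f₂) (f : S →ᵇ ℝ) : |ν f| = ν |f| := by
  have habs : |f| * |f| = f * f := by ext x; simp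
  have hsq : |ν f| ^ 2 = ν |f| ^ 2 := by rw [sq_abs, sq, sq, ← hmul, ← hmul, habs]
  exact (pow_left_inj₀ (abs_nonneg _) (hν _ (abs_nonneg f)) two_ne_zero).1 hsq

lemma eq_of_smul_apply_le_of_abs_apply (hμ1 : μ 1 = 1) (habs : ∀ f : S →ᵇ ℝ, |μ f| = μ |f|)
    (hν : ν ∈ Ma1S S) {a : ℝ} (ha : 0 < a) (hνμ : ∀ f : S →ᵇ ℝ, 0 ≤ f → a * ν f ≤ μ f) :
    ν = μ := by
  obtain ⟨hν1, hνpos⟩ := mem_Ma1S_iff.1 hν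
  ext f
  set g := f - μ f • 1
  have hμg : μ |g| = 0 := by rw [← habs]; simp [g, hμ1]
  have hνg : ν |g| = 0 := le_antisymm
    (nonpos_of_mul_nonpos_right (hμg ▸ hνμ _ (abs_nonneg g)) ha) (hνpos _ (abs_nonneg g))
  have h := abs_nonpos_iff.1 ((abs_apply_le_apply_abs hνpos g).trans hνg.le)
  simpa [g, hν1, sub_eq_zero] using h

lemma mem_extremePoints_of_abs_apply (hμ : μ ∈ Ma1S S) (habs : ∀ f : S →ᵇ ℝ, |μ f| = μ |f|) :
    μ ∈ (Ma1S S).extremePoints ℝ := by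
  have hμ1 := (mem_Ma1S_iff.1 hμ).1
  refine ⟨hμ, fun ν₁ hν₁ ν₂ hν₂ ⟨a, b, ha, hb, _, hab⟩ =>
    eq_of_smul_apply_le_of_abs_apply hμ1 habs hν₁ ha fun f hf => ?_⟩
  rw [← hab]
  simp only [_root_.add_apply, _root_.smul_apply, smul_eq_mul]
  linarith [mul_nonneg hb.le (hν₂.2 f hf)]

end ExtremePoints

/-- For `μ ∈ M^a_1(S)`, `S` an arbitrary topological space, the
following are equivalent: (i) `μ` is an extreme point of `M^a_1(S)`;
(iv) `μ` is a lattice homomorphism (`|μ(f)| = μ(|f|)`);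
(v) `μ` is an algebra homomorphism (`μ(f₁f₂) = μ(f₁)μ(f₂)`). -/
theorem statement12 {S : Type*} [TopologicalSpace S]
    (μ : (S →ᵇ ℝ) →L[ℝ] ℝ) (hμ : μ ∈ Ma1S S) :
    (μ ∈ Set.extremePoints ℝ (Ma1S S) ↔ ∀ f : S →ᵇ ℝ, |μ f| = μ |f|) ∧
    (μ ∈ Set.extremePoints ℝ (Ma1S S) ↔
      ∀ f₁ f₂ : S →ᵇ ℝ, μ (f₁ * f₂) = μ f₁ * μ f₂) := by
  have extreme_mul : μ ∈ (Ma1S S).extremePoints ℝ → ∀ f₁ f₂ : S →ᵇ ℝ,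
      μ (f₁ * f₂) = μ f₁ * μ f₂ := apply_mul_of_mem_extremePoints
  have mul_abs : (∀ f₁ f₂ : S →ᵇ ℝ, μ (f₁ * f₂) = μ f₁ * μ f₂) → ∀ f : S →ᵇ ℝ,
      |μ f| = μ |f| := abs_apply_of_apply_mul hμ.2
  have abs_extreme := mem_extremePoints_of_abs_apply hμ
  exact ⟨⟨mul_abs ∘ extreme_mul, abs_extreme⟩, ⟨extreme_mul, abs_extreme ∘ mul_abs⟩⟩
end
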